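/- arXiv:1512.07517 — 5 statements merged into one kernel-verified Lean document; each statement's English description precedes it below -/
import Mathlib

section
/- Let H be a finite-dimensional complex inner product space of dimension n, let B = {e_1,...,e_n} be an orthogonal basis of H, and let A be the associated orthogonal apartment of the Grassmannian G_k(H), i.e. the set of all k-dimensional subspaces spanned by subsets of B. If X, Y ∈ A are distinct with dim(X ∩ Y) = m, then the number of unordered pairs {i,j} (i ≠ j) such that both X and Y belong to C_{ij} := A(+i,-j) ∪ A(+j,-i) equals (k-m)^2 + m(n-2k+m). Here A(+i,-j) denotes the set of elements of A containing e_i and not containing e_j. -/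
/-!
Orthogonal nonzero vectors are linearly independent, so `e i ∈ span (e '' S) ↔ i ∈ S` and
`span (e '' S) ⊓ span (e '' T) = span (e '' (S ∩ T))`: the count only concerns the index sets
`Sx`, `Sy`. Orient a pair separated by `Sx` as `(i, j)` with `i ∈ Sx`, `j ∉ Sx`; it is also
separated by `Sy` iff `(i, j)` lies in `(Sx \ Sy) × (Sy \ Sx)` or in `(Sx ∩ Sy) × (Sx ∪ Sy)ᶜ`,
which have `(k - m)²` and `m (n - 2k + m)` elements.
-/

open Module Submodule

section LinearIndependent

variable {ι R M : Type*} [Ring R] [AddCommGroup M] [Module R M] {v : ι → M}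

theorem LinearIndependent.mem_span_image_iff [Nontrivial R] (hv : LinearIndependent R v)
    {s : Set ι} {i : ι} : v i ∈ span R (v '' s) ↔ i ∈ s :=
  ⟨fun h => by_contra fun hi => hv.notMem_span_image hi h,
    fun hi => subset_span (Set.mem_image_of_mem v hi)⟩

theorem LinearIndependent.span_image_inf_span_image (hv : LinearIndependent R v) (s t : Set ι) :
    span R (v '' s) ⊓ span R (v '' t) = span R (v '' (s ∩ t)) := by
  simp only [Finsupp.span_image_eq_map_linearCombination, Finsupp.supported_inter,
    Submodule.map_inf _ hv]

theorem LinearIndependent.finrank_span_image_finset [StrongRankCondition R]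
    (hv : LinearIndependent R v) (s : Finset ι) : finrank R (span R (v '' s)) = s.card := by
  have := nontrivial_of_invariantBasisNumber R
  rw [Set.image_eq_range]
  exact (finrank_span_eq_card (hv.comp _ Subtype.val_injective)).trans (Fintype.card_coe s)

end LinearIndependent

open Finset

section SeparatedPairs

variable {α : Type*}

def Separates (s : Set α) (i j : α) : Prop := (i ∈ s ∧ j ∉ s) ∨ (j ∈ s ∧ i ∉ s)

def separatedPairs (s t : Set α) : Set (Finset α) :=
  {p | p.card = 2 ∧ ∃ i ∈ p, ∃ j ∈ p, i ≠ j ∧ Separates s i j ∧ Separates t i j}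

variable [DecidableEq α]

theorem injOn_pair_of_mem_of_notMem (s : Set α) :
    Set.InjOn (fun q : α × α => ({q.1, q.2} : Finset α)) {q | q.1 ∈ s ∧ q.2 ∉ s} := by
  rintro ⟨a, b⟩ ⟨ha, hb⟩ ⟨c, d⟩ ⟨hc, hd⟩ h
  simp only [Finset.ext_iff, mem_insert, mem_singleton] at h
  have hac : a = c := ((h a).1 (Or.inl rfl)).resolve_right fun had => hd (had ▸ ha)
  have hbd : b = d := ((h b).1 (Or.inr rfl)).resolve_left fun hbc => hb (hbc ▸ hc)
  rw [hac, hbd]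

variable [Fintype α] (S T : Finset α)

def orientedPairs : Finset (α × α) := (S \ T) ×ˢ (T \ S) ∪ (S ∩ T) ×ˢ (S ∪ T)ᶜ

theorem mem_orientedPairs {q : α × α} :
    q ∈ orientedPairs S T ↔ q.1 ∈ S ∧ q.2 ∉ S ∧ Separates (T : Set α) q.1 q.2 := by
  simp only [orientedPairs, Separates, mem_union, mem_product, mem_sdiff, mem_inter, mem_compl,
    mem_coe]
  tauto

theorem separatedPairs_eq_image :
    separatedPairs (S : Set α) T =
      (orientedPairs S T).image fun q => ({q.1, q.2} : Finset α) := by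
  ext p
  simp only [separatedPairs, Set.mem_ofPred_eq, coe_image, Set.mem_image, mem_coe,
    mem_orientedPairs]
  constructor
  · rintro ⟨hp, i, hi, j, hj, hij, hS, hT⟩
    have hp : p = {i, j} := (eq_of_subset_of_card_le (insert_subset hi (singleton_subset_iff.2 hj))
      (by rw [hp, card_pair hij])).symm
    rcases hS with ⟨hiS, hjS⟩ | ⟨hjS, hiS⟩
    · exact ⟨(i, j), ⟨hiS, hjS, hT⟩, hp.symm⟩
    · refine ⟨(j, i), ⟨hjS, hiS, ?_⟩, by rw [hp, pair_comm]⟩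
      unfold Separates at hT ⊢
      tauto
  · rintro ⟨⟨a, b⟩, ⟨ha, hb, hT⟩, rfl⟩
    have hab : a ≠ b := fun h => hb (h ▸ ha)
    exact ⟨card_pair hab, a, mem_insert_self _ _, b, mem_insert_of_mem (mem_singleton_self _),
      hab, Or.inl ⟨ha, hb⟩, hT⟩

theorem card_orientedPairs :
    #(orientedPairs S T) = #(S \ T) * #(T \ S) + #(S ∩ T) * #((S ∪ T)ᶜ) := by
  rw [orientedPairs, card_union_of_disjoint
    (disjoint_product.2 (Or.inl (disjoint_sdiff_inter S T))), card_product, card_product]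

theorem ncard_separatedPairs :
    (separatedPairs (S : Set α) T).ncard = #(S \ T) * #(T \ S) + #(S ∩ T) * #((S ∪ T)ᶜ) := by
  have hinj : Set.InjOn (fun q : α × α => ({q.1, q.2} : Finset α)) ↑(orientedPairs S T) :=
    (injOn_pair_of_mem_of_notMem (S : Set α)).mono fun _ hq =>
      ((mem_orientedPairs S T).1 hq).imp_right And.left
  rw [separatedPairs_eq_image, Set.ncard_coe_finset, card_image_of_injOn hinj,
    card_orientedPairs]

theorem ncard_separatedPairs_of_card_eq {k m : ℕ} (hS : #S = k) (hT : #T = k)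
    (hSTm : #(S ∩ T) = m) :
    ((separatedPairs (S : Set α) T).ncard : ℤ) =
      ((k : ℤ) - m) ^ 2 + m * ((Fintype.card α : ℤ) - 2 * k + m) := by
  have hS' := card_sdiff_add_card_inter S T
  have hT' := card_sdiff_add_card_inter T S
  have hunion := card_union_add_card_inter S T
  have hcompl := card_add_card_compl (S ∪ T)
  rw [inter_comm] at hT'
  have hST : (#(S \ T) : ℤ) = k - m := by omega
  have hTS : (#(T \ S) : ℤ) = k - m := by omega
  have hout : (#((S ∪ T)ᶜ) : ℤ) = Fintype.card α - 2 * k + m := by omega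
  rw [ncard_separatedPairs]
  push_cast
  rw [hST, hTS, hout, hSTm]
  ring

end SeparatedPairs

theorem stmt_6_general {H : Type*} [NormedAddCommGroup H] [InnerProductSpace ℂ H]
    (n k m : ℕ)
    (e : Fin n → H) (he0 : ∀ i, e i ≠ 0)
    (he : ∀ i j, i ≠ j → inner ℂ (e i) (e j) = (0 : ℂ))
    (Sx Sy : Finset (Fin n)) (hSx : Sx.card = k) (hSy : Sy.card = k)
    (X Y : Submodule ℂ H)
    (hX : X = Submodule.span ℂ (e '' Sx)) (hY : Y = Submodule.span ℂ (e '' Sy))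
    (hm : finrank ℂ ↥(X ⊓ Y) = m) :
    ({p : Finset (Fin n) | p.card = 2 ∧
        ∃ i ∈ p, ∃ j ∈ p, i ≠ j ∧
          ((e i ∈ X ∧ e j ∉ X) ∨ (e j ∈ X ∧ e i ∉ X)) ∧
          ((e i ∈ Y ∧ e j ∉ Y) ∨ (e j ∈ Y ∧ e i ∉ Y))}.ncard : ℤ) =
      ((k : ℤ) - m) ^ 2 + m * ((n : ℤ) - 2 * k + m) := by
  have hli : LinearIndependent ℂ e := linearIndependent_of_ne_zero_of_inner_eq_zero he0 he
  have hpreimage (S : Finset (Fin n)) : e ⁻¹' span ℂ (e '' S) = S :=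
    Set.ext fun _ => hli.mem_span_image_iff
  have hinter : #(Sx ∩ Sy) = m := by
    rw [← hm, hX, hY, hli.span_image_inf_span_image, ← coe_inter, hli.finrank_span_image_finset]
  change ((separatedPairs (e ⁻¹' X) (e ⁻¹' Y)).ncard : ℤ) = _
  rw [hX, hY, hpreimage, hpreimage, ncard_separatedPairs_of_card_eq Sx Sy hSx hSy hinter,
    Fintype.card_fin]

theorem stmt_6 {H : Type*} [NormedAddCommGroup H] [InnerProductSpace ℂ H]
    (n k m : ℕ) (hn : finrank ℂ H = n) (hk1 : 1 < k) (hk2 : k < n - 1)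
    (e : Fin n → H) (he0 : ∀ i, e i ≠ 0)
    (he : ∀ i j, i ≠ j → inner ℂ (e i) (e j) = (0 : ℂ))
    (hspan : Submodule.span ℂ (Set.range e) = ⊤)
    (Sx Sy : Finset (Fin n)) (hSx : Sx.card = k) (hSy : Sy.card = k)
    (X Y : Submodule ℂ H)
    (hX : X = Submodule.span ℂ (e '' Sx)) (hY : Y = Submodule.span ℂ (e '' Sy))
    (hXY : X ≠ Y) (hm : finrank ℂ ↥(X ⊓ Y) = m) :
    ({p : Finset (Fin n) | p.card = 2 ∧
        ∃ i ∈ p, ∃ j ∈ p, i ≠ j ∧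
          ((e i ∈ X ∧ e j ∉ X) ∨ (e j ∈ X ∧ e i ∉ X)) ∧
          ((e i ∈ Y ∧ e j ∉ Y) ∨ (e j ∈ Y ∧ e i ∉ Y))}.ncard : ℤ) =
      ((k : ℤ) - m) ^ 2 + m * ((n : ℤ) - 2 * k + m) :=
  stmt_6_general n k m e he0 he Sx Sy hSx hSy X Y hX hY hm
end

section
/- Let A be the orthogonal apartment of G_k(H) defined by an orthogonal basis {e_1,...,e_n} with 1 < k < n-1. For distinct indices i,j and i',j' with {i,j} ≠ {i',j'}: if {i,j} ∩ {i',j'} ≠ ∅ then |C_{ij} ∩ C_{i'j'}| = C(n-2, k-1), and if {i,j} ∩ {i',j'} = ∅ then |C_{ij} ∩ C_{i'j'}| = 4·C(n-4, k-2). -/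
/-!
A `k`-set lies in `C_{ij} ∩ C_{i'j'}` according to its trace on `{i, j, i', j'}`, and once the
trace is fixed the rest of the set is an arbitrary subset of the remaining indices of the
complementary size. For a shared index `x` (pairs `{x, y}`, `{x, z}`) the admissible traces are
`{x}` and `{y, z}`, giving `C(n-3, k-1) + C(n-3, k-2) = C(n-2, k-1)` by Pascal's rule; for
disjoint pairs they are the four sets with one element from each pair, each contributing
`C(n-4, k-2)`.
-/

open Finset

variable {α : Type*} [DecidableEq α]

theorem card_filter_card_eq_Icc_finset {s t : Finset α} (hst : s ⊆ t) {k : ℕ} (hk : #s ≤ k) :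
    #{u ∈ Icc s t | #u = k} = (#t - #s).choose (k - #s) := by
  have hdisj : ∀ v ∈ (t \ s).powerset, Disjoint s v := fun v hv =>
    disjoint_of_subset_right (mem_powerset.1 hv) disjoint_sdiff
  rw [Icc_eq_image_powerset hst, filter_image, card_image_of_injOn, ← card_sdiff_of_subset hst,
    ← card_powersetCard, powersetCard_eq_filter]
  · refine congrArg card (filter_congr fun v hv => ?_)
    rw [card_union_of_disjoint (hdisj v hv)]
    omega
  · intro v hv w hw h
    rw [← union_sdiff_cancel_left (hdisj v (mem_filter.1 hv).1),
      ← union_sdiff_cancel_left (hdisj w (mem_filter.1 hw).1)]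
    exact congrArg (· \ s) h

theorem disjoint_Icc_finset_of_mem_of_notMem {s₁ t₁ s₂ t₂ : Finset α} {a : α} (h₁ : a ∈ s₁)
    (h₂ : a ∉ t₂) : Disjoint (Icc s₁ t₁) (Icc s₂ t₂) :=
  disjoint_left.2 fun _ hu₁ hu₂ => h₂ ((mem_Icc.1 hu₂).2 ((mem_Icc.1 hu₁).1 h₁))

variable [Fintype α]

/-- The paper's `C_{ab}`, with the elements of the apartment identified with `k`-sets of
indices. -/
def separating (k : ℕ) (a b : α) : Finset (Finset α) :=
  {s | #s = k ∧ Xor (a ∈ s) (b ∈ s)}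

theorem separating_comm (k : ℕ) (a b : α) : separating k a b = separating k b a := by
  simp only [separating, xor_comm]

theorem card_separating_inter_separating_of_left_eq {k : ℕ} (hk : 2 ≤ k) {x y z : α}
    (hxy : x ≠ y) (hxz : x ≠ z) (hyz : y ≠ z) :
    #(separating k x y ∩ separating k x z) = (Fintype.card α - 2).choose (k - 1) := by
  have hsplit : separating k x y ∩ separating k x z =
      {u ∈ Icc {x} ({y, z} : Finset α)ᶜ | #u = k} ∪
        {u ∈ Icc {y, z} ({x} : Finset α)ᶜ | #u = k} := by
    ext u
    simp only [separating, mem_inter, mem_union, mem_filter, mem_univ, true_and, mem_Icc,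
      singleton_subset_iff, insert_subset_iff, subset_compl_iff_disjoint_right,
      disjoint_insert_right, disjoint_singleton_right, xor_def]
    tauto
  have hcard : 3 ≤ Fintype.card α := by
    simpa [card_insert_of_notMem, hxy, hxz, hyz] using card_le_univ {x, y, z}
  rw [hsplit, card_union_of_disjoint (disjoint_filter_filter
      (disjoint_Icc_finset_of_mem_of_notMem (mem_singleton_self x) (by simp))),
    card_filter_card_eq_Icc_finset (by simp [hxy, hxz]) (by simp; omega),
    card_filter_card_eq_Icc_finset (by simp [hxy, hxz]) (by simp [hyz]; omega)]
  simp only [card_compl, card_singleton, card_pair hyz]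
  obtain ⟨m, hm⟩ : ∃ m, Fintype.card α = m + 3 := ⟨_, (Nat.sub_add_cancel hcard).symm⟩
  rw [hm, show m + 3 - 2 - 1 = m by omega, show m + 3 - 1 - 2 = m by omega,
    show m + 3 - 2 = m + 1 by omega, show k - 1 = k - 2 + 1 by omega, Nat.choose_succ_succ',
    add_comm]

theorem card_separating_inter_separating_of_disjoint {k : ℕ} (hk : 2 ≤ k) {x y z w : α}
    (hxy : x ≠ y) (hxz : x ≠ z) (hxw : x ≠ w) (hyz : y ≠ z) (hyw : y ≠ w) (hzw : z ≠ w) :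
    #(separating k x y ∩ separating k z w) = 4 * (Fintype.card α - 4).choose (k - 2) := by
  have hsplit : separating k x y ∩ separating k z w =
      {u ∈ Icc {x, z} ({y, w} : Finset α)ᶜ | #u = k} ∪
        ({u ∈ Icc {x, w} ({y, z} : Finset α)ᶜ | #u = k} ∪
          ({u ∈ Icc {y, z} ({x, w} : Finset α)ᶜ | #u = k} ∪
            {u ∈ Icc {y, w} ({x, z} : Finset α)ᶜ | #u = k})) := by
    ext u
    simp only [separating, mem_inter, mem_union, mem_filter, mem_univ, true_and, mem_Icc,
      singleton_subset_iff, insert_subset_iff, subset_compl_iff_disjoint_right,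
      disjoint_insert_right, disjoint_singleton_right, xor_def]
    tauto
  have hpiece : ∀ a b c d : α, a ≠ b → a ≠ c → a ≠ d → b ≠ c → b ≠ d → c ≠ d →
      #{u ∈ Icc {a, b} ({c, d} : Finset α)ᶜ | #u = k} = (Fintype.card α - 4).choose (k - 2) := by
    intro a b c d hab hac had hbc hbd hcd
    rw [card_filter_card_eq_Icc_finset
      (by rw [subset_compl_iff_disjoint_right]; simp [*, Ne.symm]) (by simp [hab]; omega),
      card_compl, card_pair hab, card_pair hcd, Nat.sub_sub]
  have hdisj : ∀ {s₁ t₁ s₂ t₂ : Finset α} (a : α), a ∈ s₁ → a ∉ t₂ →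
      Disjoint {u ∈ Icc s₁ t₁ | #u = k} {u ∈ Icc s₂ t₂ | #u = k} := fun _ h₁ h₂ =>
    disjoint_filter_filter (disjoint_Icc_finset_of_mem_of_notMem h₁ h₂)
  rw [hsplit, card_union_of_disjoint, card_union_of_disjoint, card_union_of_disjoint,
    hpiece x z y w hxz hxy hxw hyz.symm hzw hyw,
    hpiece x w y z hxw hxy hxz hyw.symm hzw.symm hyz,
    hpiece y z x w hyz hxy.symm hyw hxz.symm hzw hxw,
    hpiece y w x z hyw hxy.symm hyz hxw.symm hzw.symm hxz]
  · ring
  · exact hdisj z (by simp) (by simp)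
  · exact disjoint_union_right.2 ⟨hdisj x (by simp) (by simp), hdisj x (by simp) (by simp)⟩
  · exact disjoint_union_right.2 ⟨hdisj z (by simp) (by simp),
      disjoint_union_right.2 ⟨hdisj x (by simp) (by simp), hdisj x (by simp) (by simp)⟩⟩

theorem card_separating_inter_separating_of_inter_nonempty {k : ℕ} (hk : 2 ≤ k)
    {i j i' j' : α} (hij : i ≠ j) (hij' : i' ≠ j') (hne : ({i, j} : Finset α) ≠ {i', j'})
    (hmeet : (({i, j} : Finset α) ∩ {i', j'}).Nonempty) :
    #(separating k i j ∩ separating k i' j') = (Fintype.card α - 2).choose (k - 1) := by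
  obtain ⟨a, ha⟩ := hmeet
  simp only [mem_inter, mem_insert, mem_singleton] at ha
  obtain ⟨rfl | rfl, rfl | rfl⟩ := ha
  · exact card_separating_inter_separating_of_left_eq hk hij hij' fun h => hne (h ▸ rfl)
  · rw [separating_comm k i']
    exact card_separating_inter_separating_of_left_eq hk hij hij'.symm
      fun h => hne (by rw [h, pair_comm])
  · rw [separating_comm k i]
    exact card_separating_inter_separating_of_left_eq hk hij.symm hij'
      fun h => hne (by rw [h, pair_comm])
  · rw [separating_comm k i, separating_comm k i']
    exact card_separating_inter_separating_of_left_eq hk hij.symm hij'.symm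
      fun h => hne (by rw [h])

theorem card_separating_inter_separating_of_inter_eq_empty {k : ℕ} (hk : 2 ≤ k)
    {i j i' j' : α} (hij : i ≠ j) (hij' : i' ≠ j')
    (hempty : ({i, j} : Finset α) ∩ {i', j'} = ∅) :
    #(separating k i j ∩ separating k i' j') = 4 * (Fintype.card α - 4).choose (k - 2) := by
  have hfar : ∀ a ∈ ({i, j} : Finset α), a ≠ i' ∧ a ≠ j' := fun a ha => by
    simpa using disjoint_left.1 (disjoint_iff_inter_eq_empty.2 hempty) ha
  have hi := hfar i (by simp)
  have hj := hfar j (by simp)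
  exact card_separating_inter_separating_of_disjoint hk hij hi.1 hi.2 hj.1 hj.2 hij'

theorem stmt_8_general (n k : ℕ) (hk1 : 1 < k)
    (i j i' j' : Fin n) (hij : i ≠ j) (hij' : i' ≠ j')
    (hne : ({i, j} : Finset (Fin n)) ≠ {i', j'})
    (C : Fin n → Fin n → Set (Finset (Fin n)))
    (hC : ∀ a b : Fin n, C a b =
      {s : Finset (Fin n) | s.card = k ∧ ((a ∈ s ∧ b ∉ s) ∨ (b ∈ s ∧ a ∉ s))}) :
    ((({i, j} : Finset (Fin n)) ∩ {i', j'}).Nonempty →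
        (C i j ∩ C i' j').ncard = Nat.choose (n - 2) (k - 1)) ∧
      ((({i, j} : Finset (Fin n)) ∩ {i', j'}) = ∅ →
        (C i j ∩ C i' j').ncard = 4 * Nat.choose (n - 4) (k - 2)) := by
  have hC' : ∀ a b, C a b = separating k a b := fun a b => by
    rw [hC]; ext s; simp [separating, xor_def]
  rw [hC', hC', ← coe_inter, Set.ncard_coe_finset]
  refine ⟨fun hmeet => ?_, fun hempty => ?_⟩
  · simpa using card_separating_inter_separating_of_inter_nonempty hk1 hij hij' hne hmeet
  · simpa using card_separating_inter_separating_of_inter_eq_empty hk1 hij hij' hempty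

theorem stmt_8 (n k : ℕ) (hk1 : 1 < k) (hk2 : k < n - 1)
    (i j i' j' : Fin n) (hij : i ≠ j) (hij' : i' ≠ j')
    (hne : ({i, j} : Finset (Fin n)) ≠ {i', j'})
    (C : Fin n → Fin n → Set (Finset (Fin n)))
    (hC : ∀ a b : Fin n, C a b =
      {s : Finset (Fin n) | s.card = k ∧ ((a ∈ s ∧ b ∉ s) ∨ (b ∈ s ∧ a ∉ s))}) :
    ((({i, j} : Finset (Fin n)) ∩ {i', j'}).Nonempty →
        (C i j ∩ C i' j').ncard = Nat.choose (n - 2) (k - 1)) ∧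
      ((({i, j} : Finset (Fin n)) ∩ {i', j'}) = ∅ →
        (C i j ∩ C i' j').ncard = 4 * Nat.choose (n - 4) (k - 2)) :=
  stmt_8_general n k hk1 i j i' j' hij hij' hne C hC
end

section
/- If X and Y are compatible subspaces of a finite-dimensional complex inner product space H, then X^⊥ and Y are compatible. -/
open Module Submodule

/-- Two subspaces `X`, `Y` are compatible if there exist subspaces `X'`, `Y'` such that
`X ⊓ Y`, `X'`, `Y'` are mutually orthogonal, `X = X' + (X ⊓ Y)` and `Y = Y' + (X ⊓ Y)`. -/
def Compatible {H : Type*} [NormedAddCommGroup H] [InnerProductSpace ℂ H]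
    (X Y : Submodule ℂ H) : Prop :=
  ∃ X' Y' : Submodule ℂ H,
    X' ≤ (X ⊓ Y)ᗮ ∧ Y' ≤ (X ⊓ Y)ᗮ ∧ X' ≤ Y'ᗮ ∧
    X = X' ⊔ (X ⊓ Y) ∧ Y = Y' ⊔ (X ⊓ Y)

/-! If `X = X' ⊕ M` and `Y = Y' ⊕ M` with `M = X ⊓ Y` and `X', Y', M` mutually orthogonal, then
`Xᗮ ⊓ Y = Y'`. Hence `Xᗮ` splits as `Y' ⊕ (Y'ᗮ ⊓ Xᗮ)` and `Y` as `Y' ⊕ M`, which exhibits `Xᗮ` and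
`Y` as compatible with common part `Y'` and orthogonal remainders `Y'ᗮ ⊓ Xᗮ` and `M`. -/

namespace Submodule

variable {𝕜 E : Type*} [RCLike 𝕜] [NormedAddCommGroup E] [InnerProductSpace 𝕜 E]

lemma le_orthogonal_comm {U V : Submodule 𝕜 E} (h : U ≤ Vᗮ) : V ≤ Uᗮ :=
  isOrtho_iff_le.1 (isOrtho_iff_le.2 h).symm

/-- By modularity, `Kᗮ ⊓ (B ⊔ M) = B ⊔ (Kᗮ ⊓ M)`, and `Kᗮ ⊓ M ≤ Kᗮ ⊓ K = ⊥`. -/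
lemma orthogonal_inf_sup_eq_of_le {K B M : Submodule 𝕜 E} (hB : B ≤ Kᗮ) (hM : M ≤ K) :
    Kᗮ ⊓ (B ⊔ M) = B := by
  have hMK : M ⊓ Kᗮ = ⊥ := eq_bot_iff.2 <| (inf_le_inf_right _ hM).trans K.inf_orthogonal_eq_bot.le
  rw [inf_comm, sup_inf_assoc_of_le M hB, hMK, sup_bot_eq]

end Submodule

theorem stmt_11 {H : Type*} [NormedAddCommGroup H] [InnerProductSpace ℂ H]
    [FiniteDimensional ℂ H] (X Y : Submodule ℂ H) (h : Compatible X Y) :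
    Compatible Xᗮ Y := by
  obtain ⟨X', Y', -, hY'M, hX'Y', hX, hY⟩ := h
  have hMX : X ⊓ Y ≤ X := inf_le_left
  generalize X ⊓ Y = M at *
  have hY'X : Y' ≤ Xᗮ := by
    rw [hX, ← isOrtho_iff_le, isOrtho_sup_right]
    exact ⟨(isOrtho_iff_le.2 hX'Y').symm, isOrtho_iff_le.2 hY'M⟩
  have hXY : Xᗮ ⊓ Y = Y' := by
    rw [hY]
    exact orthogonal_inf_sup_eq_of_le hY'X hMX
  refine ⟨Y'ᗮ ⊓ Xᗮ, M, ?_, ?_, ?_, ?_, ?_⟩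
  · exact hXY ▸ inf_le_left
  · exact hXY ▸ le_orthogonal_comm hY'M
  · exact inf_le_right.trans (orthogonal_le hMX)
  · rw [hXY, sup_comm, sup_orthogonal_inf_of_hasOrthogonalProjection hY'X]
  · rw [hXY, sup_comm, ← hY]
end

section
/- Let H be an n-dimensional complex vector space and let T : H → H be an invertible semilinear operator (linear over a field automorphism of ℂ) that sends orthogonal vectors to orthogonal vectors with respect to a given inner product. Then T is a scalar multiple of a unitary or conjugate-unitary (antiunitary) operator. -/
/-!
If `u ⟂ v` and `‖u‖ = ‖v‖` then `u + v ⟂ u - v`, so an orthogonality-preserving additive map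
sends orthogonal vectors of equal norm to vectors of equal norm. For an orthonormal pair
`e₁, e₂` the vectors `e₁ + a • e₂` and `-conj a • e₁ + e₂` are orthogonal; comparing images
shows that `σ` commutes with complex conjugation, hence preserves `ℝ`, hence fixes it and is
the identity or the conjugation. Rescaling along orthogonal directions and Pythagoras then give
`‖T x‖ = ‖T e₁‖ * ‖x‖`, and `‖T e₁‖⁻¹ • T` is a (conjugate-)linear isometry.
-/

open Module

open scoped ComplexConjugate InnerProductSpace

namespace Complex

theorem ringHom_apply_ofReal_of_map_conj {σ : ℂ →+* ℂ} (h : ∀ a, σ (conj a) = conj (σ a))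
    (t : ℝ) : σ t = t := by
  have him : ∀ t : ℝ, (σ t).im = 0 := fun t => by rw [← conj_eq_iff_im, ← h, conj_ofReal]
  -- `σ` restricts to a ring endomorphism of `ℝ`, and the identity is the only one.
  let τ : ℝ →+* ℝ :=
    { toFun := fun t => (σ t).re
      map_one' := by simp
      map_mul' := fun s t => by simp [mul_re, him]
      map_zero' := by simp
      map_add' := fun s t => by simp }
  exact Complex.ext (DFunLike.congr_fun (Subsingleton.elim τ (RingHom.id ℝ)) t) (him t)

theorem ringHom_eq_id_or_conj_of_map_ofReal {σ : ℂ →+* ℂ} (h : ∀ t : ℝ, σ t = t) :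
    σ = RingHom.id ℂ ∨ σ = conj := by
  simpa only [DFunLike.ext_iff] using! real_algHom_eq_id_or_conj
    (AlgHom.mk' σ fun t a => by rw [real_smul, map_mul, h, real_smul])

theorem norm_ringHom_apply_of_map_ofReal {σ : ℂ →+* ℂ} (h : ∀ t : ℝ, σ t = t) (a : ℂ) :
    ‖σ a‖ = ‖a‖ := by
  rcases ringHom_eq_id_or_conj_of_map_ofReal h with rfl | rfl
  · rfl
  · exact norm_conj a

end Complex

theorem exists_linearIsometryEquiv_smul_of_norm_map {𝕜 E F : Type*} [RCLike 𝕜]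
    [NormedAddCommGroup E] [NormedSpace 𝕜 E] [NormedAddCommGroup F] [NormedSpace 𝕜 F]
    {σ₁₂ σ₂₁ : 𝕜 →+* 𝕜} [RingHomInvPair σ₁₂ σ₂₁] [RingHomInvPair σ₂₁ σ₁₂]
    (f : E →ₛₗ[σ₁₂] F) (hf : Function.Surjective f) {r : ℝ} (hr : 0 < r)
    (hnorm : ∀ x, ‖f x‖ = r * ‖x‖) :
    ∃ U : E ≃ₛₗᵢ[σ₁₂] F, ∀ x, f x = (r : 𝕜) • U x := by
  have hr' : (r : 𝕜) ≠ 0 := RCLike.ofReal_ne_zero.mpr hr.ne'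
  let g : E →ₛₗ[σ₁₂] F := (r : 𝕜)⁻¹ • f
  have hg : ∀ x, ‖g x‖ = ‖x‖ := fun x => by
    simp [g, norm_smul, hnorm, abs_of_pos hr, hr.ne']
  refine ⟨LinearIsometryEquiv.ofSurjective ⟨g, hg⟩ fun y => ?_, fun x => ?_⟩
  · obtain ⟨x, hx⟩ := hf ((r : 𝕜) • y)
    exact ⟨x, by simp [g, hx, hr']⟩
  · show f x = (r : 𝕜) • ((r : 𝕜)⁻¹ • f x)
    rw [smul_inv_smul₀ hr']

section

variable {E F : Type*} [NormedAddCommGroup E] [InnerProductSpace ℂ E]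
  [NormedAddCommGroup F] [InnerProductSpace ℂ F]

def PreservesOrthogonality (f : E → F) : Prop :=
  ∀ x y, ⟪x, y⟫_ℂ = 0 → ⟪f x, f y⟫_ℂ = 0

namespace PreservesOrthogonality

variable {σ : ℂ →+* ℂ} {f : E →ₛₗ[σ] F}

theorem norm_map_eq (hf : PreservesOrthogonality f) {u v : E} (huv : ⟪u, v⟫_ℂ = 0)
    (h : ‖u‖ = ‖v‖) : ‖f u‖ = ‖f v‖ := by
  have hvu : ⟪v, u⟫_ℂ = 0 := inner_eq_zero_symm.mp huv
  have key : ⟪u + v, u - v⟫_ℂ = 0 := by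
    simp only [inner_add_left, inner_sub_right, huv, hvu, inner_self_eq_norm_sq_to_K, h]
    ring
  have hfkey := hf _ _ key
  simp only [map_add, map_sub, inner_add_left, inner_sub_right, hf _ _ huv, hf _ _ hvu,
    inner_self_eq_norm_sq_to_K] at hfkey
  have hsq : ((‖f u‖ ^ 2 : ℝ) : ℂ) = ((‖f v‖ ^ 2 : ℝ) : ℂ) := by
    push_cast
    linear_combination hfkey
  exact (sq_eq_sq₀ (norm_nonneg _) (norm_nonneg _)).mp (Complex.ofReal_injective hsq)

theorem ringHom_map_conj (hf : PreservesOrthogonality f) {e₁ e₂ : E}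
    (h₁₂ : ⟪e₁, e₂⟫_ℂ = 0) (hnorm : ‖e₁‖ = ‖e₂‖) (hfe : f e₁ ≠ 0) (a : ℂ) :
    σ (conj a) = conj (σ a) := by
  have h₂₁ : ⟪e₂, e₁⟫_ℂ = 0 := inner_eq_zero_symm.mp h₁₂
  have hfnorm := hf.norm_map_eq h₁₂ hnorm
  have key : ⟪e₁ + a • e₂, -conj a • e₁ + e₂⟫_ℂ = 0 := by
    simp only [inner_add_left, inner_add_right, inner_smul_left, inner_smul_right, h₁₂, h₂₁,
      inner_self_eq_norm_sq_to_K, hnorm]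
    ring
  have hfkey := hf _ _ key
  simp only [map_add, map_smulₛₗ, inner_add_left, inner_add_right, inner_smul_left,
    inner_smul_right, hf _ _ h₁₂, hf _ _ h₂₁, inner_self_eq_norm_sq_to_K, hfnorm, map_neg]
    at hfkey
  have hne : (‖f e₂‖ : ℂ) ^ 2 ≠ 0 := by
    rw [← hfnorm]
    exact pow_ne_zero _ (Complex.ofReal_ne_zero.mpr (norm_ne_zero_iff.mpr hfe))
  have hmul : (σ (conj a) - conj (σ a)) * (‖f e₂‖ : ℂ) ^ 2 = 0 := by
    linear_combination -hfkey
  exact sub_eq_zero.mp ((mul_eq_zero.mp hmul).resolve_right hne)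

theorem norm_map_mul_norm_eq (hf : PreservesOrthogonality f) (hσ : ∀ t : ℝ, σ t = t)
    {u v : E} (huv : ⟪u, v⟫_ℂ = 0) : ‖f u‖ * ‖v‖ = ‖f v‖ * ‖u‖ := by
  have h := hf.norm_map_eq (u := (‖v‖ : ℂ) • u) (v := (‖u‖ : ℂ) • v)
    (by rw [inner_smul_left, inner_smul_right, huv]; simp)
    (by simp [norm_smul, mul_comm])
  rw [map_smulₛₗ, map_smulₛₗ, hσ, hσ, norm_smul, norm_smul] at h
  simpa [mul_comm] using h

theorem norm_map_eq_norm_map_mul_norm (hf : PreservesOrthogonality f) (hσ : ∀ t : ℝ, σ t = t)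
    {e : E} (he : ‖e‖ = 1) (y : E) : ‖f y‖ = ‖f e‖ * ‖y‖ := by
  set α := ⟪e, y⟫_ℂ
  set z := y - α • e
  have hez : ⟪e, z⟫_ℂ = 0 := by
    simp [z, α, inner_self_eq_norm_sq_to_K, he]
  have hz : ⟪α • e, z⟫_ℂ = 0 := by rw [inner_smul_left, hez, mul_zero]
  have hy : y = α • e + z := by simp [z]
  have hfz : ‖f z‖ = ‖f e‖ * ‖z‖ := by
    simpa [he] using (hf.norm_map_mul_norm_eq hσ hez).symm
  have h₁ := norm_add_sq_eq_norm_sq_add_norm_sq_of_inner_eq_zero _ _ hz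
  have h₂ := norm_add_sq_eq_norm_sq_add_norm_sq_of_inner_eq_zero _ _ (hf _ _ hz)
  rw [← hy, norm_smul, he, mul_one] at h₁
  rw [← map_add, ← hy, map_smulₛₗ, norm_smul, Complex.norm_ringHom_apply_of_map_ofReal hσ, hfz]
    at h₂
  have hsq : ‖f y‖ * ‖f y‖ = (‖f e‖ * ‖y‖) * (‖f e‖ * ‖y‖) := by
    rw [h₂]
    linear_combination (-(‖f e‖ * ‖f e‖)) * h₁
  exact (mul_self_inj (norm_nonneg _) (by positivity)).mp hsq

end PreservesOrthogonality

end

theorem stmt_16 {H : Type*} [NormedAddCommGroup H] [InnerProductSpace ℂ H]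
    [FiniteDimensional ℂ H] (hn : 2 ≤ finrank ℂ H)
    (σ : ℂ ≃+* ℂ) (T : H → H) (hbij : Function.Bijective T)
    (hadd : ∀ x y : H, T (x + y) = T x + T y)
    (hsmul : ∀ (a : ℂ) (x : H), T (a • x) = σ a • T x)
    (horth : ∀ x y : H, inner ℂ x y = (0 : ℂ) → inner ℂ (T x) (T y) = (0 : ℂ)) :
    ∃ c : ℂ, c ≠ 0 ∧
      ((∃ U : H ≃ₗᵢ[ℂ] H, ∀ x, T x = c • U x) ∨
       (∃ U : H ≃ₗᵢ⋆[ℂ] H, ∀ x, T x = c • U x)) := by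
  let f : H →ₛₗ[(σ : ℂ →+* ℂ)] H := { toFun := T, map_add' := hadd, map_smul' := hsmul }
  have hf : PreservesOrthogonality f := horth
  obtain ⟨e, he⟩ : ∃ e : Fin 2 → H, Orthonormal ℂ e :=
    ⟨_, (stdOrthonormalBasis ℂ H).orthonormal.comp _ (Fin.castLE_injective hn)⟩
  have hfe : f (e 0) ≠ 0 := (map_ne_zero_iff f hbij.1).mpr (he.ne_zero 0)
  have hσ : ∀ t : ℝ, σ t = t := Complex.ringHom_apply_ofReal_of_map_conj
    (hf.ringHom_map_conj (he.2 (show (0 : Fin 2) ≠ 1 by decide))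
      ((he.1 0).trans (he.1 1).symm) hfe)
  have hnorm : ∀ x, ‖T x‖ = ‖T (e 0)‖ * ‖x‖ := hf.norm_map_eq_norm_map_mul_norm hσ (he.1 0)
  have hr : 0 < ‖T (e 0)‖ := norm_pos_iff.mpr hfe
  refine ⟨‖T (e 0)‖, Complex.ofReal_ne_zero.mpr hr.ne', ?_⟩
  rcases Complex.ringHom_eq_id_or_conj_of_map_ofReal (σ := σ) hσ with hid | hconj
  · refine .inl (exists_linearIsometryEquiv_smul_of_norm_map
      { toFun := T, map_add' := hadd, map_smul' := fun a x => ?_ } hbij.2 hr hnorm)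
    rw [hsmul]; exact congr($hid a • T x)
  · refine .inr (exists_linearIsometryEquiv_smul_of_norm_map
      { toFun := T, map_add' := hadd, map_smul' := fun a x => ?_ } hbij.2 hr hnorm)
    rw [hsmul]; exact congr($hconj a • T x)
end

section
/- Let A be the orthogonal apartment of G_k(H) defined by an orthogonal basis of an n-dimensional space H, with 1 < k < n-1. The maximal cliques of the restriction of the Grassmann graph to A (adjacency: dim(X∩Y) = k-1) are exactly the stars (all elements of A containing a fixed (k-1)-subset of the basis) and the tops (all elements of A contained in the span of a fixed (k+1)-subset of the basis); stars have exactly n-k+1 elements and tops have exactly k+1 elements. -/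
section Aux
open Finset
variable {n : ℕ}

lemma exists_insert_eq {P s : Finset (Fin n)} (hPs : P ⊆ s) (h : s.card = P.card + 1) :
    ∃ a, a ∉ P ∧ s = insert a P := by
  have h1 : (s \ P).card = 1 := by rw [card_sdiff_of_subset hPs]; omega
  obtain ⟨a, ha⟩ := Finset.card_eq_one.mp h1
  have haP : a ∈ s \ P := ha ▸ Finset.mem_singleton_self a
  refine ⟨a, (Finset.mem_sdiff.mp haP).2, ?_⟩
  have := Finset.union_sdiff_of_subset hPs
  rw [ha] at this
  rw [← this, Finset.union_comm]
  rfl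

lemma mem_star {k : ℕ} (hk : 1 ≤ k) {S : Finset (Fin n)} (hS : S.card = k - 1)
    {s : Finset (Fin n)} : (s.card = k ∧ S ⊆ s) ↔ ∃ a, a ∉ S ∧ s = insert a S := by
  constructor
  · rintro ⟨h1, h2⟩
    exact exists_insert_eq h2 (by omega)
  · rintro ⟨a, ha, rfl⟩
    exact ⟨by rw [card_insert_of_notMem ha]; omega, subset_insert _ _⟩

lemma star_inter {S : Finset (Fin n)} {a b : Fin n} (ha : a ∉ S) (hb : b ∉ S) (hab : a ≠ b) :
    insert a S ∩ insert b S = S := by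
  ext w
  simp only [mem_inter, mem_insert]
  constructor
  · rintro ⟨(rfl | h), (h' | h')⟩ <;> first | exact absurd h' hab | assumption
  · intro h; exact ⟨Or.inr h, Or.inr h⟩

lemma top_inter {k : ℕ} {N s t : Finset (Fin n)} (hN : N.card = k + 1)
    (hs : s.card = k) (hsN : s ⊆ N) (ht : t.card = k) (htN : t ⊆ N) (hne : s ≠ t) :
    (s ∩ t).card = k - 1 := by
  have h1 : (s ∪ t).card + (s ∩ t).card = s.card + t.card := card_union_add_card_inter s t
  have h2 : (s ∪ t).card ≤ k + 1 := hN ▸ card_le_card (union_subset hsN htN)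
  have h3 : s ⊂ s ∪ t := by
    refine Finset.ssubset_iff_subset_ne.mpr ⟨subset_union_left, fun h => hne ?_⟩
    have htsub : t ⊆ s := by rw [h]; exact subset_union_right
    exact (Finset.eq_of_subset_of_card_le htsub (by omega)).symm
  have h4 := Finset.card_lt_card h3
  omega

lemma adj3 {k : ℕ} (hk : 1 ≤ k) {s t u : Finset (Fin n)}
    (hs : s.card = k) (ht : t.card = k) (hu : u.card = k)
    (hst : (s ∩ t).card = k - 1)
    (hsu : (s ∩ u).card = k - 1) (htu : (t ∩ u).card = k - 1)
    (h : ¬ s ∩ t ⊆ u) : ∃ x ∈ s ∩ t, x ∉ u ∧ u = (s ∪ t).erase x := by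
  obtain ⟨x, hx, hxu⟩ := Finset.not_subset.mp h
  have hxs : x ∈ s := (Finset.mem_inter.mp hx).1
  have hxt : x ∈ t := (Finset.mem_inter.mp hx).2
  have hse : s ∩ u = s.erase x := by
    apply Finset.eq_of_subset_of_card_le
    · intro w hw
      rw [Finset.mem_erase]
      exact ⟨fun h => hxu (h ▸ (Finset.mem_inter.mp hw).2), (Finset.mem_inter.mp hw).1⟩
    · rw [Finset.card_erase_of_mem hxs, hs, hsu]
  have hte : t ∩ u = t.erase x := by
    apply Finset.eq_of_subset_of_card_le
    · intro w hw
      rw [Finset.mem_erase]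
      exact ⟨fun h => hxu (h ▸ (Finset.mem_inter.mp hw).2), (Finset.mem_inter.mp hw).1⟩
    · rw [Finset.card_erase_of_mem hxt, ht, htu]
  have h1 : (s ∪ t).erase x ⊆ u := by
    intro w hw
    rw [Finset.mem_erase, Finset.mem_union] at hw
    obtain ⟨hwx, hw | hw⟩ := hw
    · have : w ∈ s ∩ u := hse ▸ Finset.mem_erase.mpr ⟨hwx, hw⟩
      exact (Finset.mem_inter.mp this).2
    · have : w ∈ t ∩ u := hte ▸ Finset.mem_erase.mpr ⟨hwx, hw⟩
      exact (Finset.mem_inter.mp this).2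
  have hcu : (s ∪ t).card = k + 1 := by
    have := Finset.card_union_add_card_inter s t
    omega
  refine ⟨x, hx, hxu, ?_⟩
  refine (Finset.eq_of_subset_of_card_le h1 ?_).symm
  rw [Finset.card_erase_of_mem (Finset.mem_union_left _ hxs), hcu, hu]
  omega
lemma star_count {k : ℕ} (hk1 : 1 < k) (hk2 : k < n - 1) (S : Finset (Fin n))
    (hS : S.card = k - 1) :
    ({s : Finset (Fin n) | s.card = k ∧ S ⊆ s}).ncard = n - k + 1 := by
  have hset : {s : Finset (Fin n) | s.card = k ∧ S ⊆ s} =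
      ↑(Sᶜ.image (fun a => insert a S)) := by
    ext s
    simp only [Set.mem_setOf_eq, coe_image, Set.mem_image, mem_coe, mem_compl]
    constructor
    · rintro ⟨h1, h2⟩
      obtain ⟨a, ha, rfl⟩ := exists_insert_eq h2 (by omega)
      exact ⟨a, ha, rfl⟩
    · rintro ⟨a, ha, rfl⟩
      exact ⟨by rw [card_insert_of_notMem ha]; omega, subset_insert _ _⟩
  rw [hset, Set.ncard_coe_finset]
  rw [Finset.card_image_of_injOn]
  · rw [card_compl, hS, Fintype.card_fin]; omega
  · intro a ha b hb hab
    simp only [coe_compl, Set.mem_compl_iff, mem_coe] at ha hb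
    simp only at hab
    have : a ∈ insert b S := hab ▸ Finset.mem_insert_self a S
    rcases Finset.mem_insert.mp this with h | h
    · exact h
    · exact absurd h ha

lemma top_count {k : ℕ} (N : Finset (Fin n)) (hN : N.card = k + 1) :
    ({s : Finset (Fin n) | s.card = k ∧ s ⊆ N}).ncard = k + 1 := by
  have hset : {s : Finset (Fin n) | s.card = k ∧ s ⊆ N} = ↑(N.powersetCard k) := by
    ext s
    simp only [Set.mem_setOf_eq, mem_coe, Finset.mem_powersetCard]
    tauto
  rw [hset, Set.ncard_coe_finset, Finset.card_powersetCard, hN,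
    Nat.choose_succ_self_right]

lemma star_max {k : ℕ} (hk1 : 1 < k) (hk2 : k < n - 1) {S : Finset (Fin n)}
    (hS : S.card = k - 1) (𝒟 : Set (Finset (Fin n)))
    (hDcard : ∀ s ∈ 𝒟, s.card = k)
    (hDadj : ∀ s ∈ 𝒟, ∀ t ∈ 𝒟, s ≠ t → (s ∩ t).card = k - 1)
    (hsub : {s : Finset (Fin n) | s.card = k ∧ S ⊆ s} ⊆ 𝒟) :
    {s : Finset (Fin n) | s.card = k ∧ S ⊆ s} = 𝒟 := by
  apply Set.Subset.antisymm hsub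
  intro t ht
  refine ⟨hDcard t ht, ?_⟩
  by_contra hSt
  obtain ⟨x, hxS, hxt⟩ := Finset.not_subset.mp hSt
  have hmem : ∀ a, a ∉ S → insert a S ∈ 𝒟 := fun a ha =>
    hsub ⟨by rw [card_insert_of_notMem ha]; omega, subset_insert _ _⟩
  have hne : ∀ a, t ≠ insert a S := fun a h =>
    hxt (h ▸ Finset.mem_insert_of_mem hxS)
  -- every a ∉ S lies in t
  have key : ∀ a, a ∉ S → a ∈ t := by
    intro a ha
    by_contra hat
    have hint := hDadj t ht _ (hmem a ha) (hne a)
    have hsub2 : t ∩ insert a S ⊆ S.erase x := by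
      intro w hw
      rw [Finset.mem_inter, Finset.mem_insert] at hw
      obtain ⟨hwt, (rfl | hwS)⟩ := hw
      · exact absurd hwt hat
      · exact Finset.mem_erase.mpr ⟨fun h => hxt (h ▸ hwt), hwS⟩
    have := Finset.card_le_card hsub2
    rw [hint, Finset.card_erase_of_mem hxS, hS] at this
    omega
  -- one instance gives |t ∩ S| ≥ k - 2
  obtain ⟨a₀, ha₀⟩ : ∃ a, a ∉ S := by
    by_contra hall
    push_neg at hall
    have : (Finset.univ : Finset (Fin n)) ⊆ S := fun a _ => hall a
    have := Finset.card_le_card this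
    simp [hS] at this
    omega
  have hint := hDadj t ht _ (hmem a₀ ha₀) (hne a₀)
  have hsub3 : t ∩ insert a₀ S ⊆ insert a₀ (t ∩ S) := by
    intro w hw
    rw [Finset.mem_inter, Finset.mem_insert] at hw
    rcases hw with ⟨hwt, rfl | hwS⟩
    · exact Finset.mem_insert_self _ _
    · exact Finset.mem_insert_of_mem (Finset.mem_inter.mpr ⟨hwt, hwS⟩)
  have h5 := Finset.card_le_card hsub3
  have h6 := Finset.card_insert_le a₀ (t ∩ S)
  -- so (t ∩ S).card ≥ k - 2
  have h7 : Sᶜ ∪ (t ∩ S) ⊆ t := by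
    apply Finset.union_subset
    · intro a ha; exact key a (Finset.mem_compl.mp ha)
    · exact Finset.inter_subset_left
  have h8 : Disjoint (Sᶜ) (t ∩ S) :=
    Finset.disjoint_left.mpr (fun a ha h => (Finset.mem_compl.mp ha) (Finset.mem_inter.mp h).2)
  have h9 := Finset.card_le_card h7
  rw [Finset.card_union_of_disjoint h8, Finset.card_compl, hS, Fintype.card_fin,
    hDcard t ht] at h9
  omega

lemma top_max {k : ℕ} (hk1 : 1 < k) {N : Finset (Fin n)}
    (hN : N.card = k + 1) (𝒟 : Set (Finset (Fin n)))
    (hDcard : ∀ s ∈ 𝒟, s.card = k)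
    (hDadj : ∀ s ∈ 𝒟, ∀ t ∈ 𝒟, s ≠ t → (s ∩ t).card = k - 1)
    (hsub : {s : Finset (Fin n) | s.card = k ∧ s ⊆ N} ⊆ 𝒟) :
    {s : Finset (Fin n) | s.card = k ∧ s ⊆ N} = 𝒟 := by
  apply Set.Subset.antisymm hsub
  intro t ht
  refine ⟨hDcard t ht, ?_⟩
  by_contra htN
  have hmem : ∀ a ∈ N, N.erase a ∈ 𝒟 := fun a ha =>
    hsub ⟨by rw [Finset.card_erase_of_mem ha, hN]; omega, Finset.erase_subset _ _⟩
  have hne : ∀ a ∈ N, t ≠ N.erase a := fun a ha h =>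
    htN (h ▸ Finset.erase_subset _ _)
  have key : ∀ a ∈ N, a ∉ t := by
    intro a ha hat
    have hint := hDadj t ht _ (hmem a ha) (hne a ha)
    have hsub2 : t ∩ N.erase a ⊆ (t ∩ N).erase a := by
      intro w hw
      rw [Finset.mem_inter, Finset.mem_erase] at hw
      exact Finset.mem_erase.mpr ⟨hw.2.1, Finset.mem_inter.mpr ⟨hw.1, hw.2.2⟩⟩
    have h1 := Finset.card_le_card hsub2
    have h2 : (t ∩ N).card ≤ k - 1 := by
      by_contra h
      push_neg at h
      have : t ∩ N = t := Finset.eq_of_subset_of_card_le Finset.inter_subset_left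
        (by rw [hDcard t ht]; omega)
      exact htN (this ▸ Finset.inter_subset_right)
    have h3 := Finset.card_erase_of_mem (Finset.mem_inter.mpr ⟨hat, ha⟩)
    rw [hint] at h1
    omega
  obtain ⟨a₀, ha₀⟩ : N.Nonempty := Finset.card_pos.mp (by omega)
  have hint := hDadj t ht _ (hmem a₀ ha₀) (hne a₀ ha₀)
  have hempty : t ∩ N.erase a₀ = ∅ := by
    rw [Finset.eq_empty_iff_forall_notMem]
    intro w hw
    rw [Finset.mem_inter, Finset.mem_erase] at hw
    exact key w hw.2.2 hw.1
  rw [hempty, Finset.card_empty] at hint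
  omega
lemma clique_sub (hk1 : 1 < k) (hk2 : k < n - 1) (𝒞 : Set (Finset (Fin n)))
    (hcard : ∀ s ∈ 𝒞, s.card = k)
    (hadj : ∀ s ∈ 𝒞, ∀ t ∈ 𝒞, s ≠ t → (s ∩ t).card = k - 1) :
    (∃ S : Finset (Fin n), S.card = k - 1 ∧
        𝒞 ⊆ {s : Finset (Fin n) | s.card = k ∧ S ⊆ s}) ∨
    (∃ N : Finset (Fin n), N.card = k + 1 ∧
        𝒞 ⊆ {s : Finset (Fin n) | s.card = k ∧ s ⊆ N}) := by
  by_cases htwo : ∃ s ∈ 𝒞, ∃ t ∈ 𝒞, s ≠ t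
  · obtain ⟨s, hs, t, ht, hst⟩ := htwo
    have hsk := hcard s hs
    have htk := hcard t ht
    have hP : (s ∩ t).card = k - 1 := hadj s hs t ht hst
    by_cases hall : ∀ u ∈ 𝒞, s ∩ t ⊆ u
    · exact Or.inl ⟨s ∩ t, hP, fun u hu => ⟨hcard u hu, hall u hu⟩⟩
    · push_neg at hall
      obtain ⟨u₀, hu₀, hu₀P⟩ := hall
      have hu₀k := hcard u₀ hu₀
      have hsu₀ : s ≠ u₀ := fun h => hu₀P (h ▸ Finset.inter_subset_left)
      have htu₀ : t ≠ u₀ := fun h => hu₀P (h ▸ Finset.inter_subset_right)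
      obtain ⟨x, hx, hxu₀, hu₀eq⟩ := adj3 (by omega) hsk htk hu₀k hP
        (hadj s hs u₀ hu₀ hsu₀) (hadj t ht u₀ hu₀ htu₀) hu₀P
      have hNcard : (s ∪ t).card = k + 1 := by
        have := Finset.card_union_add_card_inter s t
        omega
      refine Or.inr ⟨s ∪ t, hNcard, fun v hv => ⟨hcard v hv, ?_⟩⟩
      by_cases hvs : v = s
      · exact hvs ▸ Finset.subset_union_left
      by_cases hvt : v = t
      · exact hvt ▸ Finset.subset_union_right
      by_cases hPv : s ∩ t ⊆ v
      · exfalso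
        -- v = insert c (s ∩ t) with c ∉ s ∪ t, contradiction with adjacency to u₀
        obtain ⟨c, hc, hveq⟩ := exists_insert_eq hPv (by rw [hcard v hv, hP]; omega)
        have hcs : c ∉ s := by
          intro h
          apply hvs
          apply Finset.eq_of_subset_of_card_le _ (by rw [hsk, hcard v hv])
          rw [hveq]
          exact Finset.insert_subset h Finset.inter_subset_left
        have hct : c ∉ t := by
          intro h
          apply hvt
          apply Finset.eq_of_subset_of_card_le _ (by rw [htk, hcard v hv])
          rw [hveq]
          exact Finset.insert_subset h Finset.inter_subset_right
        have hvu₀ : v ≠ u₀ := fun h => hu₀P (h ▸ hPv)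
        have hint := hadj v hv u₀ hu₀ hvu₀
        have hsub2 : v ∩ u₀ ⊆ (s ∩ t).erase x := by
          intro w hw
          rw [Finset.mem_inter] at hw
          have hwv := hw.1
          have hwu := hw.2
          rw [hveq, Finset.mem_insert] at hwv
          rcases hwv with rfl | hwP
          · exfalso
            have : w ∈ (s ∪ t).erase x := hu₀eq ▸ hwu
            rw [Finset.mem_erase, Finset.mem_union] at this
            tauto
          · exact Finset.mem_erase.mpr ⟨fun h => hxu₀ (h ▸ hwu), hwP⟩
        have h1 := Finset.card_le_card hsub2
        rw [hint, Finset.card_erase_of_mem hx, hP] at h1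
        omega
      · obtain ⟨y, hy, hyv, hveq⟩ := adj3 (by omega) hsk htk (hcard v hv) hP
          (hadj s hs v hv (Ne.symm hvs)) (hadj t ht v hv (Ne.symm hvt)) hPv
        rw [hveq]
        exact Finset.erase_subset _ _
  · -- at most one element
    push_neg at htwo
    by_cases hne : 𝒞.Nonempty
    · obtain ⟨s, hs⟩ := hne
      have hsk := hcard s hs
      obtain ⟨x, hx⟩ : s.Nonempty := Finset.card_pos.mp (by omega)
      refine Or.inl ⟨s.erase x, by rw [Finset.card_erase_of_mem hx, hsk], fun u hu => ?_⟩
      have huseq : u = s := htwo u hu s hs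
      subst huseq
      exact ⟨hsk, Finset.erase_subset _ _⟩
    · rw [Set.not_nonempty_iff_eq_empty] at hne
      subst hne
      obtain ⟨S, _, hS⟩ := Finset.exists_subset_card_eq
        (show k - 1 ≤ (Finset.univ : Finset (Fin n)).card by simp; omega)
      exact Or.inl ⟨S, hS, by simp⟩

end Aux

theorem stmt_18 (n k : ℕ) (hk1 : 1 < k) (hk2 : k < n - 1) :
    (∀ 𝒞 : Set (Finset (Fin n)),
      ((∀ s ∈ 𝒞, s.card = k) ∧
        (∀ s ∈ 𝒞, ∀ t ∈ 𝒞, s ≠ t → (s ∩ t).card = k - 1) ∧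
        (∀ 𝒟 : Set (Finset (Fin n)), (∀ s ∈ 𝒟, s.card = k) →
          (∀ s ∈ 𝒟, ∀ t ∈ 𝒟, s ≠ t → (s ∩ t).card = k - 1) → 𝒞 ⊆ 𝒟 → 𝒞 = 𝒟))
      ↔ ((∃ S : Finset (Fin n), S.card = k - 1 ∧
            𝒞 = {s : Finset (Fin n) | s.card = k ∧ S ⊆ s}) ∨
         (∃ N : Finset (Fin n), N.card = k + 1 ∧
            𝒞 = {s : Finset (Fin n) | s.card = k ∧ s ⊆ N}))) ∧
    (∀ S : Finset (Fin n), S.card = k - 1 →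
      ({s : Finset (Fin n) | s.card = k ∧ S ⊆ s}).ncard = n - k + 1) ∧
    (∀ N : Finset (Fin n), N.card = k + 1 →
      ({s : Finset (Fin n) | s.card = k ∧ s ⊆ N}).ncard = k + 1) := by
  refine ⟨fun 𝒞 => ⟨?_, ?_⟩, fun S hS => star_count hk1 hk2 S hS,
    fun N hN => top_count N hN⟩
  · rintro ⟨hcard, hadj, hmax⟩
    rcases clique_sub hk1 hk2 𝒞 hcard hadj with ⟨S, hS, hsub⟩ | ⟨N, hN, hsub⟩
    · refine Or.inl ⟨S, hS, ?_⟩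
      apply hmax
      · rintro s ⟨h1, _⟩; exact h1
      · rintro s ⟨h1, h2⟩ t ⟨h3, h4⟩ hst
        obtain ⟨a, ha, rfl⟩ := (mem_star (by omega) hS).mp ⟨h1, h2⟩
        obtain ⟨b, hb, rfl⟩ := (mem_star (by omega) hS).mp ⟨h3, h4⟩
        have hab : a ≠ b := fun h => hst (h ▸ rfl)
        rw [star_inter ha hb hab, hS]
      · exact hsub
    · refine Or.inr ⟨N, hN, ?_⟩
      apply hmax
      · rintro s ⟨h1, _⟩; exact h1
      · rintro s ⟨h1, h2⟩ t ⟨h3, h4⟩ hst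
        exact top_inter hN h1 h2 h3 h4 hst
      · exact hsub
  · rintro (⟨S, hS, rfl⟩ | ⟨N, hN, rfl⟩)
    · refine ⟨fun s hs => hs.1, ?_, fun 𝒟 h1 h2 h3 => star_max hk1 hk2 hS 𝒟 h1 h2 h3⟩
      rintro s ⟨h1, h2⟩ t ⟨h3, h4⟩ hst
      obtain ⟨a, ha, rfl⟩ := (mem_star (by omega) hS).mp ⟨h1, h2⟩
      obtain ⟨b, hb, rfl⟩ := (mem_star (by omega) hS).mp ⟨h3, h4⟩
      have hab : a ≠ b := fun h => hst (h ▸ rfl)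
      rw [star_inter ha hb hab, hS]
    · refine ⟨fun s hs => hs.1, ?_, fun 𝒟 h1 h2 h3 => top_max hk1 hN 𝒟 h1 h2 h3⟩
      rintro s ⟨h1, h2⟩ t ⟨h3, h4⟩ hst
      exact top_inter hN h1 h2 h3 h4 hst
end
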